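/- arXiv:1801.04491 — 9 statements merged into one kernel-verified Lean document; each statement's English description precedes it below -/
import Mathlib

section
/- Let u : ℝ_{>0} → ℝ be locally Lipschitz with limsup_{x→∞} u(x)/x < c₀ where c₀ > 0, and c₁ > 0. Define Mu(x) := sup_{i>0} {u(x+i) - c₀ i - c₁}. Then limsup_{x→∞} (Mu)(x)/x < c₀. -/
theorem sSup_intervention_le_mul {u : ℝ → ℝ} {a c₀ c₁ x : ℝ} (ha : a ≤ c₀) (hc₁ : 0 ≤ c₁)
    (hu : ∀ i > (0:ℝ), u (x + i) ≤ a * (x + i)) :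
    sSup {y : ℝ | ∃ i > (0:ℝ), y = u (x + i) - c₀ * i - c₁} ≤ a * x := by
  refine csSup_le ⟨_, 1, one_pos, rfl⟩ ?_
  rintro y ⟨i, hi, rfl⟩
  calc u (x + i) - c₀ * i - c₁ ≤ a * (x + i) - c₀ * i - c₁ := by linarith [hu i hi]
    _ = a * x - ((c₀ - a) * i + c₁) := by ring
    _ ≤ a * x := by nlinarith

theorem stmt_5_general (c₀ c₁ : ℝ) (hc₁ : 0 < c₁) (u : ℝ → ℝ)
    (hgrowth : ∃ ε > (0:ℝ), ∃ xbar : ℝ, ∀ x ≥ xbar, 0 < x → u x / x ≤ c₀ - ε) :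
    ∃ ε > (0:ℝ), ∃ xbar : ℝ, ∀ x ≥ xbar, 0 < x →
      sSup {y : ℝ | ∃ i > (0:ℝ), y = u (x + i) - c₀ * i - c₁} / x ≤ c₀ - ε := by
  obtain ⟨ε, hε, xbar, hu⟩ := hgrowth
  refine ⟨ε, hε, xbar, fun x hxbar hx => ?_⟩
  rw [div_le_iff₀ hx]
  refine sSup_intervention_le_mul (by linarith) hc₁.le fun i hi => ?_
  have hxi : 0 < x + i := by linarith
  exact (div_le_iff₀ hxi).1 (hu (x + i) (by linarith) hxi)

theorem stmt_5 (c₀ c₁ : ℝ) (hc₀ : 0 < c₀) (hc₁ : 0 < c₁) (u : ℝ → ℝ)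
    (hloclip : ∀ x > (0:ℝ), ∃ K : NNReal, ∃ ε > (0:ℝ),
      LipschitzOnWith K u (Metric.ball x ε ∩ Set.Ioi 0))
    (hgrowth : ∃ ε > (0:ℝ), ∃ xbar : ℝ, ∀ x ≥ xbar, 0 < x → u x / x ≤ c₀ - ε) :
    ∃ ε > (0:ℝ), ∃ xbar : ℝ, ∀ x ≥ xbar, 0 < x →
      sSup {y : ℝ | ∃ i > (0:ℝ), y = u (x + i) - c₀ * i - c₁} / x ≤ c₀ - ε :=
  stmt_5_general c₀ c₁ hc₁ u hgrowth
end

section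
/- Let u : ℝ_{>0} → ℝ be locally Lipschitz with limsup_{x→∞} u(x)/x < c₀ (c₀ > 0), c₁ > 0, and Mu(x) := sup_{i>0}{u(x+i) - c₀ i - c₁}. Then for every 0 < m < M there exists R > 0 such that Mu(x) = sup_{0 < i ≤ R} {u(x+i) - c₀ i - c₁} for all x ∈ [m, M], and consequently Mu is Lipschitz continuous on [m, M]. -/
/-!
Since `u` grows with slope at most `c₀ - ε`, the penalised values `u (x + i) - c₀ i - c₁` drop
below their value at `i = 1` once `i` exceeds some `R` that is uniform in `x ∈ [m, M]`, so `Mu` is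
a supremum over `i ∈ (0, R]` only. By compactness the locally Lipschitz `u` is `K`-Lipschitz on
`[m, M + R]`; hence every `x ↦ u (x + i) - c₀ i - c₁` with `i ∈ (0, R]` is `K`-Lipschitz on
`[m, M]`, and so is their (pointwise bounded) supremum.
-/

open Set Metric

open scoped NNReal

lemma locallyLipschitzOn_of_forall_ball {α β : Type*} [PseudoMetricSpace α]
    [PseudoEMetricSpace β] {f : α → β} {s : Set α}
    (hf : ∀ x ∈ s, ∃ K : ℝ≥0, ∃ ε > (0:ℝ), LipschitzOnWith K f (ball x ε ∩ s)) :
    LocallyLipschitzOn s f := fun x hx ↦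
  let ⟨K, ε, hε, hK⟩ := hf x hx
  ⟨K, _, mem_nhdsWithin_iff.2 ⟨ε, hε, subset_rfl⟩, hK⟩

lemma LipschitzOnWith.sSup_image {α ι : Type*} [PseudoMetricSpace α] {f : α → ι → ℝ}
    {s : Set α} {t : Set ι} {K : ℝ≥0} (ht : t.Nonempty) (hbdd : ∀ x ∈ s, BddAbove (f x '' t))
    (hf : ∀ i ∈ t, LipschitzOnWith K (f · i) s) :
    LipschitzOnWith K (fun x ↦ sSup (f x '' t)) s := by
  refine .of_le_add_mul K fun x hx y hy ↦ csSup_le (ht.image _) ?_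
  rintro _ ⟨i, hi, rfl⟩
  calc f x i ≤ f y i + K * dist x y := (hf i hi).le_add_mul hx hy
    _ ≤ sSup (f y '' t) + K * dist x y := by
      gcongr; exact le_csSup (hbdd y hy) (mem_image_of_mem _ hi)

lemma sSup_image_Ioi_eq_sSup_image_Ioc {ι α : Type*} [LinearOrder ι]
    [ConditionallyCompleteLinearOrder α] {g : ι → α} {a R i₀ : ι} (hi₀ : i₀ ∈ Ioc a R)
    (htail : ∀ i > R, g i ≤ g i₀) :
    sSup (g '' Ioi a) = sSup (g '' Ioc a R) := by
  refine csSup_eq_csSup_of_forall_exists_le ?_ ?_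
  · rintro _ ⟨i, hi, rfl⟩
    rcases le_or_gt i R with hiR | hiR
    · exact ⟨g i, mem_image_of_mem _ ⟨hi, hiR⟩, le_rfl⟩
    · exact ⟨g i₀, mem_image_of_mem _ hi₀, htail i hiR⟩
  · rintro _ ⟨i, hi, rfl⟩
    exact ⟨g i, mem_image_of_mem _ (Ioc_subset_Ioi_self hi), le_rfl⟩

lemma exists_forall_gt_sub_mul_le {u : ℝ → ℝ} {c₀ m M L : ℝ} (hc₀ : 0 < c₀) (hm : 0 < m)
    (hgrowth : ∃ ε > (0:ℝ), ∃ xbar : ℝ, ∀ x ≥ xbar, 0 < x → u x / x ≤ c₀ - ε)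
    (hL : ∀ x ∈ Icc m M, L ≤ u (x + 1)) :
    ∃ R ≥ (1:ℝ), ∀ x ∈ Icc m M, ∀ i > R, u (x + i) - c₀ * i ≤ u (x + 1) - c₀ := by
  obtain ⟨ε, hε, xbar, hu⟩ := hgrowth
  refine ⟨max (max xbar 1) ((c₀ * M + c₀ - L) / ε), by simp, fun x hx i hi ↦ ?_⟩
  simp only [gt_iff_lt, max_lt_iff, div_lt_iff₀ hε] at hi
  obtain ⟨⟨hxbar, h1⟩, hLi⟩ := hi
  have hx0 : 0 < x := hm.trans_le hx.1
  have hux : u (x + i) ≤ (c₀ - ε) * (x + i) :=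
    (div_le_iff₀ (by linarith)).1 (hu (x + i) (by linarith) (by linarith))
  nlinarith [hL x hx, hx.2]

lemma LipschitzOnWith.sSup_image_Ioc_shift {u : ℝ → ℝ} {K : ℝ≥0} {m M R c₀ c₁ : ℝ}
    (hR : 0 < R) (hu : LipschitzOnWith K u (Icc m (M + R))) :
    LipschitzOnWith K (fun x ↦ sSup ((fun i ↦ u (x + i) - c₀ * i - c₁) '' Ioc 0 R))
      (Icc m M) := by
  have hshift : ∀ x ∈ Icc m M, ∀ i ∈ Icc 0 R, x + i ∈ Icc m (M + R) := fun x hx i hi ↦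
    ⟨by linarith [hx.1, hi.1], by linarith [hx.2, hi.2]⟩
  refine .sSup_image ⟨R, hR, le_rfl⟩ (fun x hx ↦ ?_) fun i hi x hx y hy ↦ ?_
  · have hcont : ContinuousOn (fun i ↦ u (x + i) - c₀ * i - c₁) (Icc 0 R) :=
      ((hu.continuousOn.comp (by fun_prop) (hshift x hx)).sub (by fun_prop)).sub
        continuousOn_const
    exact (isCompact_Icc.bddAbove_image hcont).mono (image_mono Ioc_subset_Icc_self)
  · simpa [edist_sub_right, edist_add_right] using
      hu (hshift x hx i (Ioc_subset_Icc_self hi)) (hshift y hy i (Ioc_subset_Icc_self hi))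

theorem stmt_6_general (c₀ c₁ : ℝ) (hc₀ : 0 < c₀) (u : ℝ → ℝ)
    (hloclip : ∀ x > (0:ℝ), ∃ K : NNReal, ∃ ε > (0:ℝ),
      LipschitzOnWith K u (Metric.ball x ε ∩ Set.Ioi 0))
    (hgrowth : ∃ ε > (0:ℝ), ∃ xbar : ℝ, ∀ x ≥ xbar, 0 < x → u x / x ≤ c₀ - ε)
    (m M : ℝ) (hm : 0 < m) :
    ∃ R > (0:ℝ),
      (∀ x ∈ Set.Icc m M,
        sSup {y : ℝ | ∃ i > (0:ℝ), y = u (x + i) - c₀ * i - c₁}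
          = sSup {y : ℝ | ∃ i : ℝ, 0 < i ∧ i ≤ R ∧ y = u (x + i) - c₀ * i - c₁}) ∧
      ∃ K : NNReal, LipschitzOnWith K
        (fun x => sSup {y : ℝ | ∃ i > (0:ℝ), y = u (x + i) - c₀ * i - c₁})
        (Set.Icc m M) := by
  set g : ℝ → ℝ → ℝ := fun x i ↦ u (x + i) - c₀ * i - c₁
  have hu : LocallyLipschitzOn (Ioi 0) u := locallyLipschitzOn_of_forall_ball hloclip
  have hpos : ∀ a b, m ≤ a → Icc a b ⊆ Ioi 0 := fun a b ha x hx ↦ hm.trans_le (ha.trans hx.1)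
  obtain ⟨L, hL⟩ := isCompact_Icc.bddBelow_image
    (hu.continuousOn.mono (hpos (m + 1) (M + 1) (by linarith)))
  obtain ⟨R, hR1, htail⟩ := exists_forall_gt_sub_mul_le hc₀ hm hgrowth
    fun x (hx : x ∈ Icc m M) ↦ hL ⟨x + 1, ⟨by linarith [hx.1], by linarith [hx.2]⟩, rfl⟩
  obtain ⟨K, hK⟩ :=
    (hu.mono (hpos m (M + R) le_rfl)).exists_lipschitzOnWith_of_compact isCompact_Icc
  have hMu : ∀ x ∈ Icc m M, sSup (g x '' Ioi 0) = sSup (g x '' Ioc 0 R) := fun x hx ↦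
    sSup_image_Ioi_eq_sSup_image_Ioc ⟨one_pos, hR1⟩ fun i hi ↦ by
      simpa [g] using htail x hx i hi
  have hS : ∀ x, {y | ∃ i > (0:ℝ), y = u (x + i) - c₀ * i - c₁} = g x '' Ioi 0 := fun x ↦ by
    ext; simp [g, eq_comm]
  have hT : ∀ x, {y | ∃ i : ℝ, 0 < i ∧ i ≤ R ∧ y = u (x + i) - c₀ * i - c₁} = g x '' Ioc 0 R :=
    fun x ↦ by ext; simp [g, eq_comm, and_assoc]
  refine ⟨R, by linarith, fun x hx ↦ ?_, K, fun x hx y hy ↦ ?_⟩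
  · rw [hS, hT, hMu x hx]
  · simpa only [hS, hMu x hx, hMu y hy] using hK.sSup_image_Ioc_shift (c₀ := c₀) (c₁ := c₁) (by linarith) hx hy

theorem stmt_6 (c₀ c₁ : ℝ) (hc₀ : 0 < c₀) (hc₁ : 0 < c₁) (u : ℝ → ℝ)
    (hloclip : ∀ x > (0:ℝ), ∃ K : NNReal, ∃ ε > (0:ℝ),
      LipschitzOnWith K u (Metric.ball x ε ∩ Set.Ioi 0))
    (hgrowth : ∃ ε > (0:ℝ), ∃ xbar : ℝ, ∀ x ≥ xbar, 0 < x → u x / x ≤ c₀ - ε)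
    (m M : ℝ) (hm : 0 < m) (hmM : m < M) :
    ∃ R > (0:ℝ),
      (∀ x ∈ Set.Icc m M,
        sSup {y : ℝ | ∃ i > (0:ℝ), y = u (x + i) - c₀ * i - c₁}
          = sSup {y : ℝ | ∃ i : ℝ, 0 < i ∧ i ≤ R ∧ y = u (x + i) - c₀ * i - c₁}) ∧
      ∃ K : NNReal, LipschitzOnWith K
        (fun x => sSup {y : ℝ | ∃ i > (0:ℝ), y = u (x + i) - c₀ * i - c₁})
        (Set.Icc m M) :=
  stmt_6_general c₀ c₁ hc₀ u hloclip hgrowth m M hm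
end

section
/- Let v : ℝ_{>0} → ℝ be continuous with limsup_{x→∞} v(x)/x < c₀, satisfy v ≥ Mv where Mv(x) = sup_{i>0}{v(x+i) - c₀i - c₁} with c₀, c₁ > 0, and let x satisfy v(x) = Mv(x). Then the supremum defining Mv(x) is attained at some i* > 0. -/
/-!
Write `f i = v (x + i) - c₀ i - c₁` for the objective of the supremum. As `i → 0⁺`, `f i → v x - c₁`,
and the growth bound `v z ≤ (c₀ - ε) z` forces `f i → -∞` as `i → ∞`; so outside a compact interval
`[δ, M] ⊆ (0, ∞)` the objective stays below `v x - c₁ / 2 < v x = sup f`. Hence the supremum is the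
maximum of the continuous function `f` on `[δ, M]`, which is attained.
-/

open Set Filter Topology

theorem exists_isMaxOn_Ioi_of_eventually_le {f : ℝ → ℝ} {a b : ℝ} (hf : ContinuousOn f (Ioi a))
    (hleft : ∀ᶠ i in 𝓝[>] a, f i ≤ b) (hright : ∀ᶠ i in atTop, f i ≤ b)
    (hb : b < sSup (f '' Ioi a)) : ∃ j ∈ Ioi a, IsMaxOn f (Ioi a) j := by
  obtain ⟨δ, hδ, hleft⟩ := mem_nhdsGT_iff_exists_Ioo_subset.1 hleft
  obtain ⟨M, hright⟩ := eventually_atTop.1 hright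
  obtain ⟨_, ⟨i₀, hi₀, rfl⟩, hbi₀⟩ :=
    exists_lt_of_lt_csSup ((nonempty_Ioi (a := a)).image f) hb
  have hi₀δ : δ ≤ i₀ := not_lt.1 fun h => (hleft ⟨hi₀, h⟩).not_gt hbi₀
  have hi₀M : i₀ ≤ M := not_lt.1 fun h => (hright i₀ h.le).not_gt hbi₀
  have hsub : Icc δ M ⊆ Ioi a := fun i hi => lt_of_lt_of_le hδ hi.1
  obtain ⟨j, hj, hmax⟩ := isCompact_Icc.exists_isMaxOn ⟨i₀, hi₀δ, hi₀M⟩ (hf.mono hsub)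
  refine ⟨j, hsub hj, fun i (hi : a < i) => show f i ≤ f j from ?_⟩
  have hi₀j : f i₀ ≤ f j := hmax ⟨hi₀δ, hi₀M⟩
  rcases lt_or_ge i δ with hiδ | hδi
  · linarith [show f i ≤ b from hleft ⟨hi, hiδ⟩]
  rcases le_or_gt i M with hiM | hMi
  · exact hmax ⟨hδi, hiM⟩
  · linarith [hright i hMi.le]

theorem tendsto_sub_mul_atBot_of_div_le {v : ℝ → ℝ} {c ε xbar : ℝ} (hε : 0 < ε)
    (hbar : ∀ z ≥ xbar, 0 < z → v z / z ≤ c - ε) (x : ℝ) :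
    Tendsto (fun i => v (x + i) - c * i) atTop atBot := by
  refine tendsto_atBot_mono' atTop ?_
    (tendsto_atBot_add_const_left _ ((c - ε) * x) (tendsto_neg_atTop_atBot.atBot_mul_const hε))
  filter_upwards [eventually_ge_atTop (xbar - x), eventually_gt_atTop (-x)] with i hxbar hpos
  have hv : v (x + i) ≤ (c - ε) * (x + i) :=
    (div_le_iff₀ (by linarith)).1 (hbar (x + i) (by linarith) (by linarith))
  linarith

theorem stmt_7_general (c₀ c₁ : ℝ) (hc₁ : 0 < c₁) (v : ℝ → ℝ)
    (hcont : ContinuousOn v (Set.Ioi (0:ℝ)))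
    (hgrowth : ∃ ε > (0:ℝ), ∃ xbar : ℝ, ∀ z ≥ xbar, 0 < z → v z / z ≤ c₀ - ε)
    (x : ℝ) (hx : 0 < x)
    (heq : v x = sSup {y : ℝ | ∃ i > (0:ℝ), y = v (x + i) - c₀ * i - c₁}) :
    ∃ i > (0:ℝ), v x = v (x + i) - c₀ * i - c₁ := by
  obtain ⟨ε, hε, xbar, hbar⟩ := hgrowth
  set f : ℝ → ℝ := fun i => v (x + i) - c₀ * i - c₁ with hf
  have hS : {y : ℝ | ∃ i > (0:ℝ), y = f i} = f '' Ioi 0 := by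
    ext y; simp only [mem_ofPred_eq, mem_image, mem_Ioi, eq_comm (a := y)]
  rw [hS] at heq
  have hshift : MapsTo (fun i : ℝ => x + i) (Ici 0) (Ioi 0) := fun i (hi : 0 ≤ i) =>
    show 0 < x + i by linarith
  have hfcont : ContinuousOn f (Ici 0) :=
    ((hcont.comp (by fun_prop) hshift).sub (by fun_prop)).sub continuousOn_const
  have hleft : ∀ᶠ i in 𝓝[>] 0, f i ≤ v x - c₁ / 2 := by
    have hf0 : Tendsto f (𝓝[>] 0) (𝓝 (v x - c₁)) := by
      have := (hfcont 0 self_mem_Ici).mono_left (nhdsWithin_mono _ Ioi_subset_Ici_self)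
      simpa [hf] using this
    exact hf0.eventually (ge_mem_nhds (by linarith))
  have hright : ∀ᶠ i in atTop, f i ≤ v x - c₁ / 2 := by
    filter_upwards [(tendsto_sub_mul_atBot_of_div_le hε hbar x).eventually_le_atBot
      (v x + c₁ / 2)] with i hi
    linarith
  obtain ⟨j, hj, hmax⟩ := exists_isMaxOn_Ioi_of_eventually_le (hfcont.mono Ioi_subset_Ici_self)
    hleft hright (by rw [← heq]; linarith)
  exact ⟨j, hj, heq.trans (IsGreatest.csSup_eq ⟨mem_image_of_mem f hj, forall_mem_image.2 hmax⟩)⟩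

theorem stmt_7 (c₀ c₁ : ℝ) (hc₀ : 0 < c₀) (hc₁ : 0 < c₁) (v : ℝ → ℝ)
    (hcont : ContinuousOn v (Set.Ioi (0:ℝ)))
    (hgrowth : ∃ ε > (0:ℝ), ∃ xbar : ℝ, ∀ z ≥ xbar, 0 < z → v z / z ≤ c₀ - ε)
    (hgeq : ∀ z > (0:ℝ), ∀ i > (0:ℝ), v (z + i) - c₀ * i - c₁ ≤ v z)
    (x : ℝ) (hx : 0 < x)
    (heq : v x = sSup {y : ℝ | ∃ i > (0:ℝ), y = v (x + i) - c₀ * i - c₁}) :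
    ∃ i > (0:ℝ), v x = v (x + i) - c₀ * i - c₁ :=
  stmt_7_general c₀ c₁ hc₁ v hcont hgrowth x hx heq
end

section
/- Let v : ℝ_{>0} → ℝ satisfy v ≥ Mv, where Mv(x) = sup_{i>0}{v(x+i) - c₀i - c₁} with c₀, c₁ > 0. If x satisfies v(x) = Mv(x) and ξ > 0 attains this supremum (i.e., v(x) = v(x+ξ) - c₀ξ - c₁), then v(x+ξ) > Mv(x+ξ). -/
/-!
Continuing from `x + ξ` by a further jump `i` is no better than jumping directly from `x` by
`ξ + i`, which `v ≥ Mv` at `x` bounds. The proportional costs then cancel, so every value in the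
supremum defining `Mv (x + ξ)` is at most `v (x + ξ) - c₁`: the fixed cost `c₁` is paid twice.
-/

lemma sub_mul_le_of_optimal_jump {v : ℝ → ℝ} {c₀ c₁ x ξ i : ℝ}
    (hv : ∀ j > (0:ℝ), v (x + j) - c₀ * j - c₁ ≤ v x) (hξ : 0 < ξ)
    (hatt : v x = v (x + ξ) - c₀ * ξ - c₁) (hi : 0 < i) :
    v (x + ξ + i) - c₀ * i ≤ v (x + ξ) := by
  have h := hv (ξ + i) (by linarith)
  rw [← add_assoc] at h
  linarith

lemma sSup_jump_le {v : ℝ → ℝ} {c₀ c₁ z : ℝ} (hv : ∀ i > (0:ℝ), v (z + i) - c₀ * i ≤ v z) :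
    sSup {y : ℝ | ∃ i > (0:ℝ), y = v (z + i) - c₀ * i - c₁} ≤ v z - c₁ :=
  csSup_le ⟨_, 1, one_pos, rfl⟩ fun _ ⟨i, hi, hy⟩ => hy ▸ by linarith [hv i hi]

theorem stmt_8_general (c₀ c₁ : ℝ) (hc₁ : 0 < c₁) (v : ℝ → ℝ)
    (hgeq : ∀ z > (0:ℝ), ∀ i > (0:ℝ), v (z + i) - c₀ * i - c₁ ≤ v z)
    (x ξ : ℝ) (hx : 0 < x) (hξ : 0 < ξ)
    (hatt : v x = v (x + ξ) - c₀ * ξ - c₁) :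
    sSup {y : ℝ | ∃ i > (0:ℝ), y = v (x + ξ + i) - c₀ * i - c₁} < v (x + ξ) :=
  (sSup_jump_le fun _ hi => sub_mul_le_of_optimal_jump (hgeq x hx) hξ hatt hi).trans_lt
    (by linarith)

theorem stmt_8 (c₀ c₁ : ℝ) (hc₀ : 0 < c₀) (hc₁ : 0 < c₁) (v : ℝ → ℝ)
    (hgeq : ∀ z > (0:ℝ), ∀ i > (0:ℝ), v (z + i) - c₀ * i - c₁ ≤ v z)
    (x ξ : ℝ) (hx : 0 < x) (hξ : 0 < ξ)
    (heq : v x = sSup {y : ℝ | ∃ i > (0:ℝ), y = v (x + i) - c₀ * i - c₁})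
    (hatt : v x = v (x + ξ) - c₀ * ξ - c₁) :
    sSup {y : ℝ | ∃ i > (0:ℝ), y = v (x + ξ + i) - c₀ * i - c₁} < v (x + ξ) :=
  stmt_8_general c₀ c₁ hc₁ v hgeq x ξ hx hξ hatt
end

section
/- Let v : ℝ_{>0} → ℝ be differentiable, c₀, c₁ > 0, Mv(x) := sup_{i>0}{v(x+i) - c₀i - c₁}, and suppose v ≥ Mv everywhere. If x ∈ ℝ_{>0} satisfies v(x) = Mv(x) with the supremum attained at ξ > 0, then v'(x+ξ) = c₀ and v'(x) = c₀. -/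
/-!
Both derivatives come from Fermat's theorem. Since `v ≥ Mv`, the function `z ↦ v z - c₀ z` is
maximal at `x + ξ` among `z > x`, which forces `v'(x + ξ) = c₀`. The same inequality with the fixed
step `ξ` bounds `v (z + ξ) - v z` by `c₀ ξ + c₁`, with equality at `z = x`, so this difference is
maximal at `x` and `v'(x) = v'(x + ξ)`.
-/

open Filter Topology

theorem HasDerivAt.eq_of_isLocalMax_sub {f g : ℝ → ℝ} {f' g' a : ℝ} (hf : HasDerivAt f f' a)
    (hg : HasDerivAt g g' a) (hmax : IsLocalMax (fun z => f z - g z) a) : f' = g' :=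
  sub_eq_zero.mp (hmax.hasDerivAt_eq_zero (hf.sub hg))

section

variable {c₀ c₁ : ℝ} {v : ℝ → ℝ}
  (hgeq : ∀ z > (0:ℝ), ∀ i > (0:ℝ), v (z + i) - c₀ * i - c₁ ≤ v z)
  {x ξ : ℝ} (hx : 0 < x)

include hgeq hx

theorem isLocalMax_sub_mul_of_eq (hξ : 0 < ξ) (hatt : v x = v (x + ξ) - c₀ * ξ - c₁) :
    IsLocalMax (fun z => v z - c₀ * z) (x + ξ) := by
  filter_upwards [eventually_gt_nhds (by linarith : x < x + ξ)] with z hz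
  have := hgeq x hx (z - x) (by linarith)
  rw [add_sub_cancel] at this
  linarith

theorem isLocalMax_sub_shift_of_eq (hξ : 0 < ξ) (hatt : v x = v (x + ξ) - c₀ * ξ - c₁) :
    IsLocalMax (fun z => v (z + ξ) - v z) x := by
  filter_upwards [eventually_gt_nhds hx] with z hz
  linarith [hgeq z hz ξ hξ]

end

theorem stmt_9_general (c₀ c₁ : ℝ) (v v' : ℝ → ℝ)
    (hderiv : ∀ z > (0:ℝ), HasDerivAt v (v' z) z)
    (hgeq : ∀ z > (0:ℝ), ∀ i > (0:ℝ), v (z + i) - c₀ * i - c₁ ≤ v z)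
    (x ξ : ℝ) (hx : 0 < x) (hξ : 0 < ξ)
    (hatt : v x = v (x + ξ) - c₀ * ξ - c₁) :
    v' (x + ξ) = c₀ ∧ v' x = c₀ := by
  have hvξ : HasDerivAt v (v' (x + ξ)) (x + ξ) := hderiv _ (by linarith)
  have hright : v' (x + ξ) = c₀ := by
    simpa using hvξ.eq_of_isLocalMax_sub ((hasDerivAt_id _).const_mul c₀)
      (isLocalMax_sub_mul_of_eq hgeq hx hξ hatt)
  have hleft : v' (x + ξ) = v' x :=
    (hvξ.comp_add_const x ξ).eq_of_isLocalMax_sub (hderiv x hx)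
      (isLocalMax_sub_shift_of_eq hgeq hx hξ hatt)
  exact ⟨hright, hleft ▸ hright⟩

theorem stmt_9 (c₀ c₁ : ℝ) (hc₀ : 0 < c₀) (hc₁ : 0 < c₁) (v v' : ℝ → ℝ)
    (hderiv : ∀ z > (0:ℝ), HasDerivAt v (v' z) z)
    (hgeq : ∀ z > (0:ℝ), ∀ i > (0:ℝ), v (z + i) - c₀ * i - c₁ ≤ v z)
    (x ξ : ℝ) (hx : 0 < x) (hξ : 0 < ξ)
    (hatt : v x = v (x + ξ) - c₀ * ξ - c₁) :
    v' (x + ξ) = c₀ ∧ v' x = c₀ :=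
  stmt_9_general c₀ c₁ v v' hderiv hgeq x ξ hx hξ hatt
end

section
/- Let u : ℝ_{>0} → ℝ be semiconvex near a point x₀ (i.e., u(x) + K x² is convex in a neighborhood of x₀ for some K). Suppose that whenever φ ∈ C² touches u from below at x₀ (φ(x₀) = u(x₀), u - φ has a local minimum at x₀), one has ρ u(x₀) - b(x₀)φ'(x₀) - (1/2)σ²(x₀)φ''(x₀) - f(x₀) ≥ 0, where σ(x₀) > 0. Then the left and right derivatives u'_-(x₀), u'_+(x₀) (which exist by semiconvexity) are equal, i.e., u is differentiable at x₀. -/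
/-!
If `u` were not differentiable at `x₀`, then `g = u + K x²` would be a convex function whose left
derivative is strictly below its right derivative, so `u` would have a kink from below:
`u x ≥ u x₀ + q (x - x₀) + c |x - x₀|` near `x₀` with `c > 0`. The term `c |x - x₀|` dominates any
quadratic near `x₀`, hence every parabola `u x₀ + q (x - x₀) + N/2 (x - x₀)²` touches `u` from
below, whatever `N`. The supersolution inequality then bounds `σ(x₀)² N / 2` uniformly in `N`,
which is impossible since `σ(x₀) > 0`.
-/

open Set Filter Topology

theorem hasDerivAt_of_hasDerivWithinAt_Iio_Ioi {f : ℝ → ℝ} {f' x : ℝ}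
    (hl : HasDerivWithinAt f f' (Iio x) x) (hr : HasDerivWithinAt f f' (Ioi x) x) :
    HasDerivAt f f' x :=
  hasDerivAt_iff_tendsto_slope_left_right.2
    ⟨(hasDerivWithinAt_iff_tendsto_slope' self_notMem_Iio).1 hl,
      (hasDerivWithinAt_iff_tendsto_slope' self_notMem_Ioi).1 hr⟩

namespace ConvexOn

variable {S : Set ℝ} {f : ℝ → ℝ} {x : ℝ}

theorem add_mul_add_mul_abs_le (hfc : ConvexOn ℝ S f) (hx : x ∈ interior S) {y : ℝ} (hy : y ∈ S) :
    f x + (derivWithin f (Iio x) x + derivWithin f (Ioi x) x) / 2 * (y - x)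
      + (derivWithin f (Ioi x) x - derivWithin f (Iio x) x) / 2 * |y - x| ≤ f y := by
  rcases lt_trichotomy y x with hyx | rfl | hxy
  · have hslope := hfc.slope_le_leftDeriv_of_mem_interior hy hx hyx
    rw [slope_def_field, div_le_iff₀ (sub_pos.2 hyx)] at hslope
    rw [abs_of_neg (sub_neg.2 hyx)]
    linarith
  · simp
  · have hslope := hfc.rightDeriv_le_slope_of_mem_interior hx hy hxy
    rw [slope_def_field, le_div_iff₀ (sub_pos.2 hxy)] at hslope
    rw [abs_of_pos (sub_pos.2 hxy)]
    linarith

theorem exists_kink_of_not_differentiableAt (hfc : ConvexOn ℝ S f) (hx : x ∈ interior S)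
    (hnd : ¬DifferentiableAt ℝ f x) :
    ∃ p, ∃ c > 0, ∀ y ∈ S, f x + p * (y - x) + c * |y - x| ≤ f y := by
  have hlt : derivWithin f (Iio x) x < derivWithin f (Ioi x) x := by
    refine (hfc.leftDeriv_le_rightDeriv_of_mem_interior hx).lt_of_ne fun heq => hnd ?_
    refine (hasDerivAt_of_hasDerivWithinAt_Iio_Ioi ?_
      (hfc.hasDerivWithinAt_rightDeriv_of_mem_interior hx)).differentiableAt
    exact heq ▸ hfc.hasDerivWithinAt_leftDeriv_of_mem_interior hx
  exact ⟨_, _, by linarith, fun y hy => hfc.add_mul_add_mul_abs_le hx hy⟩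

end ConvexOn

theorem eventually_mul_sq_le_mul_abs (a : ℝ) {c : ℝ} (hc : 0 < c) (x : ℝ) :
    ∀ᶠ y in 𝓝 x, a * (y - x) ^ 2 ≤ c * |y - x| := by
  have hcont : Continuous fun y => a * |y - x| := by fun_prop
  filter_upwards [hcont.continuousAt.eventually_lt continuousAt_const (by simpa using hc)]
    with y hy
  rw [← sq_abs, sq, ← mul_assoc]
  exact mul_le_mul_of_nonneg_right hy.le (abs_nonneg _)

theorem exists_kink_of_convexOn_add_mul_sq {u : ℝ → ℝ} {S : Set ℝ} {K x : ℝ}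
    (hconv : ConvexOn ℝ S (fun y => u y + K * y ^ 2)) (hS : S ∈ 𝓝 x)
    (hnd : ¬DifferentiableAt ℝ u x) :
    ∃ q, ∃ c > 0, ∀ᶠ y in 𝓝 x, u x + q * (y - x) + c * |y - x| ≤ u y := by
  have hgnd : ¬DifferentiableAt ℝ (fun y => u y + K * y ^ 2) x := fun hg => hnd <| by
    simpa using hg.fun_sub ((differentiableAt_pow 2).const_mul K)
  obtain ⟨p, c, hc, hkink⟩ :=
    hconv.exists_kink_of_not_differentiableAt (mem_interior_iff_mem_nhds.2 hS) hgnd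
  refine ⟨p - 2 * K * x, c / 2, half_pos hc, ?_⟩
  filter_upwards [hS, eventually_mul_sq_le_mul_abs K (half_pos hc) x] with y hy hquad
  nlinarith [hkink y hy]

theorem eventually_add_mul_add_mul_sq_le {u : ℝ → ℝ} {x q c : ℝ} (hc : 0 < c)
    (hkink : ∀ᶠ y in 𝓝 x, u x + q * (y - x) + c * |y - x| ≤ u y) (N : ℝ) :
    ∀ᶠ y in 𝓝 x, u x + q * (y - x) + N / 2 * (y - x) ^ 2 ≤ u y := by
  filter_upwards [hkink, eventually_mul_sq_le_mul_abs (N / 2) hc x] with y hy hquad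
  linarith

theorem hasDerivAt_add_mul_add_mul_sq (a q N x y : ℝ) :
    HasDerivAt (fun y => a + q * (y - x) + N / 2 * (y - x) ^ 2) (q + N * (y - x)) y := by
  have h := (hasDerivAt_id' y).sub_const x
  refine (((h.const_mul q).const_add a).fun_add ((h.fun_pow 2).const_mul (N / 2))).congr_deriv ?_
  ring

theorem stmt_10_general (x₀ ρ : ℝ) (b σ f u : ℝ → ℝ)
    (hσ : 0 < σ x₀)
    (hsemiconvex : ∃ K : ℝ, ∃ δ > (0:ℝ),
      ConvexOn ℝ (Metric.ball x₀ δ) (fun x => u x + K * x ^ 2))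
    (hsupersol : ∀ φ : ℝ → ℝ, ContDiff ℝ 2 φ → φ x₀ = u x₀ →
      (∀ᶠ x in nhds x₀, φ x ≤ u x) →
      0 ≤ ρ * u x₀ - b x₀ * deriv φ x₀
          - (1 / 2) * (σ x₀) ^ 2 * deriv (deriv φ) x₀ - f x₀) :
    DifferentiableAt ℝ u x₀ := by
  by_contra hnd
  obtain ⟨K, δ, hδ, hconv⟩ := hsemiconvex
  obtain ⟨q, c, hc, hkink⟩ :=
    exists_kink_of_convexOn_add_mul_sq hconv (Metric.ball_mem_nhds x₀ hδ) hnd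
  have hN : ∀ N : ℝ, 0 ≤ ρ * u x₀ - b x₀ * q - 1 / 2 * σ x₀ ^ 2 * N - f x₀ := fun N => by
    have hderiv := fun y => (hasDerivAt_add_mul_add_mul_sq (u x₀) q N x₀ y).deriv
    have hφ := hsupersol (fun y => u x₀ + q * (y - x₀) + N / 2 * (y - x₀) ^ 2) (by fun_prop)
      (by simp) (eventually_add_mul_add_mul_sq_le hc hkink N)
    simpa [funext hderiv] using hφ
  have hlarge := hN (2 * (ρ * u x₀ - b x₀ * q - f x₀ + 1) / σ x₀ ^ 2)
  field_simp at hlarge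
  linarith

theorem stmt_10 (x₀ ρ : ℝ) (hx₀ : 0 < x₀) (b σ f u : ℝ → ℝ)
    (hσ : 0 < σ x₀)
    (hsemiconvex : ∃ K : ℝ, ∃ δ > (0:ℝ),
      ConvexOn ℝ (Metric.ball x₀ δ) (fun x => u x + K * x ^ 2))
    (hsupersol : ∀ φ : ℝ → ℝ, ContDiff ℝ 2 φ → φ x₀ = u x₀ →
      (∀ᶠ x in nhds x₀, φ x ≤ u x) →
      0 ≤ ρ * u x₀ - b x₀ * deriv φ x₀
          - (1 / 2) * (σ x₀) ^ 2 * deriv (deriv φ) x₀ - f x₀) :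
    DifferentiableAt ℝ u x₀ :=
  stmt_10_general x₀ ρ b σ f u hσ hsemiconvex hsupersol
end

section
/- Let ρ > 0, let b, σ, f : ℝ_{>0} → ℝ be C¹ with σ > 0, f' > 0 strictly decreasing, b concave on ℝ_{>0}, and ρ > sup b'. Let u ∈ C²((a,∞)) satisfy ρu = b u' + (σ²/2) u'' + f on (a,∞), with u''' existing (u'' differentiable). If x₀ ∈ (a,∞) is a local minimum point of u', then u'(x₀) > 0. -/
/-!
At a local minimum `x₀` of `u'` we have `u''(x₀) = 0`. Differentiating the equation once,
`ρ u - b u' - f = ½ σ² u''` has derivative `(ρ - b'(x₀)) u'(x₀) - f'(x₀)` at `x₀`. If `u'(x₀) ≤ 0`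
this derivative is negative, so `½ σ² u''`, which vanishes at `x₀`, is negative just to the right
of `x₀`; hence `u'' < 0` there and `u'` strictly decreases from `x₀`, contradicting minimality.
-/

open Filter Set Topology

theorem HasDerivAt.eventually_lt_right {g : ℝ → ℝ} {D x₀ : ℝ} (hg : HasDerivAt g D x₀)
    (hD : D < 0) : ∀ᶠ x in 𝓝[>] x₀, g x < g x₀ := by
  have hslope := (hasDerivAt_iff_tendsto_slope.mp hg).mono_left (nhdsGT_le_nhdsNE x₀)
  filter_upwards [hslope.eventually_lt_const hD, self_mem_nhdsWithin] with x hs hx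
  rw [slope_def_field, div_lt_iff₀ (sub_pos.2 hx), zero_mul] at hs
  linarith

theorem eventually_lt_of_deriv_neg_right {φ φ' : ℝ → ℝ} {x₀ : ℝ}
    (hd : ∀ᶠ x in 𝓝 x₀, HasDerivAt φ (φ' x) x) (hneg : ∀ᶠ x in 𝓝[>] x₀, φ' x < 0) :
    ∀ᶠ x in 𝓝[>] x₀, φ x < φ x₀ := by
  obtain ⟨l, r, ⟨hl, hr⟩, hlr⟩ := mem_nhds_iff_exists_Ioo_subset.mp hd
  obtain ⟨y, hy, hyneg⟩ := mem_nhdsGT_iff_exists_Ioo_subset.mp hneg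
  filter_upwards [Ioo_mem_nhdsGT (lt_min hr hy)] with z ⟨hxz, hzr⟩
  have hderiv : ∀ x ∈ Icc x₀ z, HasDerivAt φ (φ' x) x := fun x hx =>
    hlr ⟨hl.trans_le hx.1, hx.2.trans_lt (hzr.trans_le (min_le_left _ _))⟩
  obtain ⟨c, hc, hslope⟩ := exists_hasDerivAt_eq_slope φ φ' hxz
    (fun x hx => (hderiv x hx).continuousAt.continuousWithinAt)
    (fun x hx => hderiv x (Ioo_subset_Icc_self hx))
  have hc_neg : φ' c < 0 := hyneg ⟨hc.1, hc.2.trans (hzr.trans_le (min_le_right _ _))⟩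
  rw [hslope, div_lt_iff₀ (sub_pos.2 hxz), zero_mul] at hc_neg
  linarith

theorem not_isLocalMin_of_deriv_neg_right {φ φ' : ℝ → ℝ} {x₀ : ℝ}
    (hd : ∀ᶠ x in 𝓝 x₀, HasDerivAt φ (φ' x) x) (hneg : ∀ᶠ x in 𝓝[>] x₀, φ' x < 0) :
    ¬ IsLocalMin φ x₀ := fun hmin =>
  let ⟨_, hge, hlt⟩ :=
    ((hmin.filter_mono nhdsWithin_le_nhds).and (eventually_lt_of_deriv_neg_right hd hneg)).exists
  hge.not_gt hlt

theorem stmt_11_general (a ρ : ℝ) (ha : 0 ≤ a)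
    (b b' σ f f' : ℝ → ℝ)
    (hb : ∀ x > (0:ℝ), HasDerivAt b (b' x) x)
    (hf : ∀ x > (0:ℝ), HasDerivAt f (f' x) x)
    (hf'pos : ∀ x > (0:ℝ), 0 < f' x)
    (hρb : ∀ x > (0:ℝ), b' x < ρ)
    (u u' u'' : ℝ → ℝ)
    (hu : ∀ x ∈ Set.Ioi a, HasDerivAt u (u' x) x)
    (hu' : ∀ x ∈ Set.Ioi a, HasDerivAt u' (u'' x) x)
    (hode : ∀ x ∈ Set.Ioi a,
      ρ * u x = b x * u' x + (1 / 2) * (σ x) ^ 2 * u'' x + f x)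
    (x₀ : ℝ) (hx₀ : x₀ ∈ Set.Ioi a) (hmin : IsLocalMin u' x₀) :
    0 < u' x₀ := by
  have hx₀pos : 0 < x₀ := ha.trans_lt hx₀
  have hu''x₀ : u'' x₀ = 0 := hmin.hasDerivAt_eq_zero (hu' x₀ hx₀)
  set g := fun x => ρ * u x - b x * u' x - f x
  have hg : HasDerivAt g ((ρ - b' x₀) * u' x₀ - f' x₀) x₀ := by
    refine ((((hu x₀ hx₀).const_mul ρ).sub ((hb x₀ hx₀pos).mul (hu' x₀ hx₀))).sub
      (hf x₀ hx₀pos)).congr_deriv ?_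
    rw [hu''x₀]
    ring
  have hg_eq : ∀ x ∈ Ioi a, g x = 1 / 2 * σ x ^ 2 * u'' x := fun x hx => by
    linarith [hode x hx]
  by_contra! hle
  have hD : (ρ - b' x₀) * u' x₀ - f' x₀ < 0 := by
    nlinarith [hρb x₀ hx₀pos, hf'pos x₀ hx₀pos]
  have hu''_neg : ∀ᶠ x in 𝓝[>] x₀, u'' x < 0 := by
    filter_upwards [hg.eventually_lt_right hD, nhdsWithin_le_nhds (Ioi_mem_nhds hx₀)]
      with x hgx hxa
    rw [hg_eq x hxa, hg_eq x₀ hx₀, hu''x₀, mul_zero] at hgx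
    by_contra! hnonneg
    exact hgx.not_ge (by positivity)
  exact not_isLocalMin_of_deriv_neg_right (eventually_of_mem (Ioi_mem_nhds hx₀) hu') hu''_neg hmin

theorem stmt_11 (a ρ : ℝ) (ha : 0 ≤ a) (hρ : 0 < ρ)
    (b b' σ f f' : ℝ → ℝ)
    (hb : ∀ x > (0:ℝ), HasDerivAt b (b' x) x)
    (hb'cont : ContinuousOn b' (Set.Ioi (0:ℝ)))
    (hσpos : ∀ x > (0:ℝ), 0 < σ x)
    (hσcont : ContinuousOn σ (Set.Ioi (0:ℝ)))
    (hf : ∀ x > (0:ℝ), HasDerivAt f (f' x) x)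
    (hf'pos : ∀ x > (0:ℝ), 0 < f' x)
    (hf'anti : StrictAntiOn f' (Set.Ioi (0:ℝ)))
    (hρb : ∀ x > (0:ℝ), b' x < ρ)
    (u u' u'' u''' : ℝ → ℝ)
    (hu : ∀ x ∈ Set.Ioi a, HasDerivAt u (u' x) x)
    (hu' : ∀ x ∈ Set.Ioi a, HasDerivAt u' (u'' x) x)
    (hu'' : ∀ x ∈ Set.Ioi a, HasDerivAt u'' (u''' x) x)
    (hode : ∀ x ∈ Set.Ioi a,
      ρ * u x = b x * u' x + (1 / 2) * (σ x) ^ 2 * u'' x + f x)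
    (x₀ : ℝ) (hx₀ : x₀ ∈ Set.Ioi a) (hmin : IsLocalMin u' x₀) :
    0 < u' x₀ :=
  stmt_11_general a ρ ha b b' σ f f' hb hf hf'pos hρb u u' u'' hu hu' hode x₀ hx₀ hmin
end

section
/- Under the assumptions of the previous statement (ρu = bu' + (σ²/2)u'' + f on (a,∞), f' > 0 strictly decreasing, b concave, ρ > sup b', σ > 0): if x₀ is a local minimum point of u' in (a,∞), then u' has no local maximum point in (x₀,∞). -/
/-!
At a critical point `c` of `u'` the equation gives `g c = 0` for `g := ρ u - b u' - f = (σ²/2) u''`,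
and `g' c = (ρ - b' c) u' c - f' c`. Since `g` and `u''` have the same sign, a local minimum of `u'`
forces `g' c ≥ 0` and a local maximum forces `g' c ≤ 0`. If a local minimum `p` lies to the left of
a local maximum `q` with `u' p ≤ u' q`, then, as `b'` is antitone and `ρ - b' > 0`,
`f' p ≤ (ρ - b' p) u' p ≤ (ρ - b' q) u' q ≤ f' q`, contradicting that `f'` strictly decreases.
Such a `p` is found by minimising `u'` on `[x₀, x₁]`.
-/

open Set Filter Topology

theorem HasDerivAt.eventually_nhdsGT_neg {g : ℝ → ℝ} {D c : ℝ} (hg : HasDerivAt g D c)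
    (hD : D < 0) (hc : g c = 0) : ∀ᶠ x in 𝓝[>] c, g x < 0 := by
  have hslope : Tendsto (slope g c) (𝓝[>] c) (𝓝 D) :=
    (hasDerivAt_iff_tendsto_slope.mp hg).mono_left (nhdsGT_le_nhdsNE c)
  filter_upwards [hslope.eventually_lt_const hD, self_mem_nhdsWithin] with x hx (hcx : c < x)
  rw [slope_def_field, hc, sub_zero] at hx
  exact ((div_neg_iff.mp hx).resolve_left fun h ↦ by linarith [h.2]).1

theorem IsLocalMin.not_eventually_nhdsGT_deriv_neg {φ φ' : ℝ → ℝ} {c : ℝ}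
    (hd : ∀ᶠ x in 𝓝 c, HasDerivAt φ (φ' x) x) (hmin : IsLocalMin φ c) :
    ¬ ∀ᶠ x in 𝓝[>] c, φ' x < 0 := by
  intro hneg
  obtain ⟨d, hcd, hsub⟩ := mem_nhdsGT_iff_exists_Ioo_subset.mp
    (((hd.and hmin).filter_mono nhdsWithin_le_nhds).and hneg)
  obtain ⟨e, hce, hed⟩ := exists_between (mem_Ioi.mp hcd)
  have hcont : ContinuousOn φ (Icc c e) := by
    intro x hx
    rcases hx.1.eq_or_lt with rfl | hcx
    · exact hd.self_of_nhds.continuousAt.continuousWithinAt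
    · exact (hsub ⟨hcx, hx.2.trans_lt hed⟩).1.1.continuousAt.continuousWithinAt
  obtain ⟨ξ, hξ, hslope⟩ := exists_hasDerivAt_eq_slope φ φ' hce hcont
    fun x hx ↦ (hsub ⟨hx.1, hx.2.trans hed⟩).1.1
  have hdrop : φ e < φ c := by
    have := (hsub ⟨hξ.1, hξ.2.trans hed⟩).2
    rw [hslope] at this
    linarith [((div_neg_iff.mp this).resolve_left fun h ↦ by linarith [h.2]).1]
  exact hdrop.not_ge (hsub ⟨hce, hed⟩).1.2

theorem exists_isLocalMin_le_of_isLocalMax {φ : ℝ → ℝ} {x₀ x₁ : ℝ} (hlt : x₀ < x₁)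
    (hφ : ContinuousOn φ (Icc x₀ x₁)) (hmin : IsLocalMin φ x₀) (hmax : IsLocalMax φ x₁) :
    ∃ p ∈ Ico x₀ x₁, IsLocalMin φ p ∧ φ p ≤ φ x₁ := by
  obtain ⟨c, hc, hcmin⟩ := isCompact_Icc.exists_isMinOn (nonempty_Icc.mpr hlt.le) hφ
  have hcx₁ : φ c ≤ φ x₁ := hcmin (right_mem_Icc.mpr hlt.le)
  rcases hc.2.lt_or_eq with hclt | rfl
  · rcases hc.1.eq_or_lt with rfl | hx₀c
    · exact ⟨x₀, ⟨le_rfl, hclt⟩, hmin, hcx₁⟩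
    · exact ⟨c, ⟨hx₀c.le, hclt⟩, hcmin.isLocalMin (Icc_mem_nhds hx₀c hclt), hcx₁⟩
  -- the minimum is at the local maximum `c`, so `φ` is constant just left of `c`
  obtain ⟨l, hl, hsub⟩ := mem_nhdsLT_iff_exists_Ioo_subset.mp
    ((hmax.and (eventually_gt_nhds hlt)).filter_mono nhdsWithin_le_nhds)
  have hconst : ∀ y ∈ Ioo l c, φ y = φ c := fun y hy ↦
    le_antisymm (hsub hy).1 (hcmin ⟨(hsub hy).2.le, hy.2.le⟩)
  obtain ⟨p, hp⟩ := nonempty_Ioo.mpr (mem_Iio.mp hl)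
  have hpmin : IsMinOn φ (Ioo l c) p := fun y hy ↦ by
    rw [mem_ofPred_eq, hconst y hy, hconst p hp]
  exact ⟨p, ⟨(hsub hp).2.le, hp.2⟩, hpmin.isLocalMin (Ioo_mem_nhds hp.1 hp.2),
    (hconst p hp).le⟩

section ValueFunction

variable {ρ c B F : ℝ} {b σ f u u' u'' : ℝ → ℝ}

theorem forcing_deriv_le_of_isLocalMin_deriv (hb : HasDerivAt b B c) (hf : HasDerivAt f F c)
    (hu : HasDerivAt u (u' c) c) (hu' : ∀ᶠ x in 𝓝 c, HasDerivAt u' (u'' x) x)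
    (hσ : ∀ᶠ x in 𝓝 c, σ x ≠ 0)
    (hode : ∀ᶠ x in 𝓝 c, ρ * u x = b x * u' x + (1 / 2) * (σ x) ^ 2 * u'' x + f x)
    (hmin : IsLocalMin u' c) : F ≤ (ρ - B) * u' c := by
  have hcrit : u'' c = 0 := hmin.hasDerivAt_eq_zero hu'.self_of_nhds
  set g := fun x ↦ ρ * u x - b x * u' x - f x
  have hg_eq : ∀ᶠ x in 𝓝 c, g x = (1 / 2) * σ x ^ 2 * u'' x :=
    hode.mono fun x hx ↦ by simp only [g]; linarith
  have hg : HasDerivAt g ((ρ - B) * u' c - F) c := by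
    refine (((hu.const_mul ρ).sub (hb.mul hu'.self_of_nhds)).sub hf).congr_deriv ?_
    rw [hcrit]; ring
  by_contra! hlt
  have hg_neg : ∀ᶠ x in 𝓝[>] c, g x < 0 :=
    hg.eventually_nhdsGT_neg (by linarith) (by rw [hg_eq.self_of_nhds, hcrit]; ring)
  refine hmin.not_eventually_nhdsGT_deriv_neg hu' ?_
  filter_upwards [hg_neg, (hg_eq.and hσ).filter_mono nhdsWithin_le_nhds]
    with x hgx ⟨hgx_eq, hσx⟩
  rw [hgx_eq] at hgx
  exact neg_of_mul_neg_right hgx (by positivity)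

theorem le_forcing_deriv_of_isLocalMax_deriv (hb : HasDerivAt b B c) (hf : HasDerivAt f F c)
    (hu : HasDerivAt u (u' c) c) (hu' : ∀ᶠ x in 𝓝 c, HasDerivAt u' (u'' x) x)
    (hσ : ∀ᶠ x in 𝓝 c, σ x ≠ 0)
    (hode : ∀ᶠ x in 𝓝 c, ρ * u x = b x * u' x + (1 / 2) * (σ x) ^ 2 * u'' x + f x)
    (hmax : IsLocalMax u' c) : (ρ - B) * u' c ≤ F := by
  have := forcing_deriv_le_of_isLocalMin_deriv (ρ := ρ) (u := -u) (u' := -u') (u'' := -u'')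
    (f := -f) hb hf.neg hu.neg (hu'.mono fun x hx ↦ hx.neg) hσ
    (hode.mono fun x hx ↦ by simp only [Pi.neg_apply]; linarith) hmax.neg
  simp only [Pi.neg_apply, mul_neg] at this
  linarith

end ValueFunction

theorem stmt_12_general (a ρ : ℝ) (ha : 0 ≤ a)
    (b b' σ f f' : ℝ → ℝ)
    (hb : ∀ x > (0:ℝ), HasDerivAt b (b' x) x)
    (hbconc : ConcaveOn ℝ (Set.Ioi (0:ℝ)) b)
    (hσpos : ∀ x > (0:ℝ), 0 < σ x)
    (hf : ∀ x > (0:ℝ), HasDerivAt f (f' x) x)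
    (hf'pos : ∀ x > (0:ℝ), 0 < f' x)
    (hf'anti : StrictAntiOn f' (Set.Ioi (0:ℝ)))
    (hρb : ∀ x > (0:ℝ), b' x < ρ)
    (u u' u'' : ℝ → ℝ)
    (hu : ∀ x ∈ Set.Ioi a, HasDerivAt u (u' x) x)
    (hu' : ∀ x ∈ Set.Ioi a, HasDerivAt u' (u'' x) x)
    (hode : ∀ x ∈ Set.Ioi a,
      ρ * u x = b x * u' x + (1 / 2) * (σ x) ^ 2 * u'' x + f x)
    (x₀ : ℝ) (hx₀ : x₀ ∈ Set.Ioi a) (hmin : IsLocalMin u' x₀) :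
    ∀ x₁ ∈ Set.Ioi x₀, ¬ IsLocalMax u' x₁ := by
  intro x₁ hx₁ hmax
  obtain ⟨p, hp, hpmin, hpx₁⟩ := exists_isLocalMin_le_of_isLocalMax hx₁
    (fun x hx ↦ (hu' x (hx₀.trans_le hx.1)).continuousAt.continuousWithinAt) hmin hmax
  have hpa : a < p := hx₀.trans_le hp.1
  have hx₁a : a < x₁ := hx₀.trans hx₁
  have hnhds {c : ℝ} (hc : a < c) : ∀ᶠ x in 𝓝 c, a < x := eventually_gt_nhds hc
  have hσ {c : ℝ} (hc : a < c) : ∀ᶠ x in 𝓝 c, σ x ≠ 0 :=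
    (hnhds hc).mono fun x hx ↦ (hσpos x (ha.trans_lt hx)).ne'
  have hp0 : 0 < p := ha.trans_lt hpa
  have hx₁0 : 0 < x₁ := ha.trans_lt hx₁a
  have hpf' := forcing_deriv_le_of_isLocalMin_deriv (hb p hp0) (hf p hp0) (hu p hpa)
    ((hnhds hpa).mono hu') (hσ hpa) ((hnhds hpa).mono hode) hpmin
  have hx₁f' := le_forcing_deriv_of_isLocalMax_deriv (hb x₁ hx₁0) (hf x₁ hx₁0) (hu x₁ hx₁a)
    ((hnhds hx₁a).mono hu') (hσ hx₁a) ((hnhds hx₁a).mono hode) hmax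
  have hb'anti : b' x₁ ≤ b' p := by
    have := hbconc.antitoneOn_deriv (fun x hx ↦ (hb x hx).differentiableAt) hp0 hx₁0 hp.2.le
    rwa [(hb p hp0).deriv, (hb x₁ hx₁0).deriv] at this
  have hu'p : 0 < u' p :=
    pos_of_mul_pos_right ((hf'pos p hp0).trans_le hpf') (by linarith [hρb p hp0])
  have hf'_le : f' p ≤ f' x₁ := calc
    f' p ≤ (ρ - b' p) * u' p := hpf'
    _ ≤ (ρ - b' x₁) * u' p := by gcongr
    _ ≤ (ρ - b' x₁) * u' x₁ := by gcongr; linarith [hρb x₁ hx₁0]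
    _ ≤ f' x₁ := hx₁f'
  exact (hf'anti hp0 hx₁0 hp.2).not_ge hf'_le

theorem stmt_12 (a ρ : ℝ) (ha : 0 ≤ a) (hρ : 0 < ρ)
    (b b' σ f f' : ℝ → ℝ)
    (hb : ∀ x > (0:ℝ), HasDerivAt b (b' x) x)
    (hbconc : ConcaveOn ℝ (Set.Ioi (0:ℝ)) b)
    (hσpos : ∀ x > (0:ℝ), 0 < σ x)
    (hf : ∀ x > (0:ℝ), HasDerivAt f (f' x) x)
    (hf'pos : ∀ x > (0:ℝ), 0 < f' x)
    (hf'anti : StrictAntiOn f' (Set.Ioi (0:ℝ)))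
    (hρb : ∀ x > (0:ℝ), b' x < ρ)
    (u u' u'' u''' : ℝ → ℝ)
    (hu : ∀ x ∈ Set.Ioi a, HasDerivAt u (u' x) x)
    (hu' : ∀ x ∈ Set.Ioi a, HasDerivAt u' (u'' x) x)
    (hu'' : ∀ x ∈ Set.Ioi a, HasDerivAt u'' (u''' x) x)
    (hode : ∀ x ∈ Set.Ioi a,
      ρ * u x = b x * u' x + (1 / 2) * (σ x) ^ 2 * u'' x + f x)
    (x₀ : ℝ) (hx₀ : x₀ ∈ Set.Ioi a) (hmin : IsLocalMin u' x₀) :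
    ∀ x₁ ∈ Set.Ioi x₀, ¬ IsLocalMax u' x₁ :=
  stmt_12_general a ρ ha b b' σ f f' hb hbconc hσpos hf hf'pos hf'anti hρb u u' u'' hu hu' hode x₀
    hx₀ hmin
end

section
/- Let u ∈ C²((a,∞)) with u''∈C¹ solve ρu = bu' + (σ²/2)u'' + f on (a,∞), under: σ > 0, b concave and C¹, f ∈ C¹ with f' > 0 strictly decreasing, ρ > sup b'. If liminf_{x→∞} u'(x) ≤ 0, then u' is strictly quasiconcave on (a,∞); in particular u' attains the value c₀ > 0 at most twice, and if u'(s) = u'(S) = c₀ with s < S, then u' > c₀ on (s,S). -/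
/-!
By the equation, the residual `g = ρ u - b u' - f` equals `(σ² / 2) u''`, so it has the sign of
`u''`. At a critical point `c` of `u'` we get `g c = 0` and `g' c = (ρ - b' c) u' c - f' c`; if this
were negative at a local minimum of `u'`, then `u'' < 0` just to the right of `c`, which is absurd.
Hence `(ρ - b' c) u' c ≥ f' c > 0` at local minima of `u'`, and dually `(ρ - b' c) u' c ≤ f' c`
at local maxima. If `u'` failed to be strictly quasiconcave, it would have an interior minimum `c`
with `u' c > 0`; since `u'` becomes small again far to the right, it would then have a local
maximum `c₁ > c` with `u' c₁ ≥ u' c`. But `f'` strictly decreases and `b'` decreases, so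
`(ρ - b' c₁) u' c₁ ≤ f' c₁ < f' c ≤ (ρ - b' c) u' c ≤ (ρ - b' c₁) u' c`, i.e. `u' c₁ < u' c`.
-/

open Set Filter Topology

section Extremum

variable {X Y : Type*} [ConditionallyCompleteLinearOrder X] [TopologicalSpace X]
  [OrderTopology X] [LinearOrder Y] [TopologicalSpace Y] [OrderClosedTopology Y]
  {f : X → Y} {a b z : X}

theorem exists_mem_Ioo_isMinOn_Icc (hf : ContinuousOn f (Icc a b)) (hz : z ∈ Ioo a b)
    (hza : f z ≤ f a) (hzb : f z ≤ f b) : ∃ c ∈ Ioo a b, IsMinOn f (Icc a b) c := by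
  obtain ⟨c, hc, hmin⟩ := isCompact_Icc.exists_isMinOn ⟨z, Ioo_subset_Icc_self hz⟩ hf
  by_cases hzc : f z ≤ f c
  · exact ⟨z, hz, isMinOn_iff.2 fun t ht => hzc.trans (isMinOn_iff.1 hmin t ht)⟩
  · refine ⟨c, ⟨hc.1.lt_of_ne ?_, hc.2.lt_of_ne' ?_⟩, hmin⟩ <;> rintro rfl
    exacts [hzc hza, hzc hzb]

theorem exists_mem_Ioo_isMaxOn_Icc (hf : ContinuousOn f (Icc a b)) (hz : z ∈ Ioo a b)
    (hza : f a ≤ f z) (hzb : f b ≤ f z) : ∃ c ∈ Ioo a b, IsMaxOn f (Icc a b) c :=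
  exists_mem_Ioo_isMinOn_Icc (Y := Yᵒᵈ) hf hz hza hzb

end Extremum

section SecondDerivativeTest

variable {v w g κ : ℝ → ℝ} {c d : ℝ}

theorem IsLocalMin.nonneg_of_hasDerivAt_of_eq_mul (hmin : IsLocalMin v c)
    (hv : ∀ᶠ t in 𝓝 c, HasDerivAt v (w t) t) (hg : HasDerivAt g d c)
    (hgw : ∀ᶠ t in 𝓝 c, g t = κ t * w t) (hκ : ∀ᶠ t in 𝓝 c, 0 < κ t) : 0 ≤ d := by
  by_contra! hd
  have hgc : g c = 0 := by
    rw [hgw.self_of_nhds, hmin.hasDerivAt_eq_zero hv.self_of_nhds, mul_zero]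
  have hsign := eventually_nhdsWithin_sign_eq_of_deriv_neg (hg.deriv ▸ hd) hgc
  have hw : ∀ᶠ t in 𝓝[>] c, w t < 0 := by
    filter_upwards [nhdsWithin_le_nhds hsign, nhdsWithin_le_nhds hgw, nhdsWithin_le_nhds hκ,
      self_mem_nhdsWithin] with t hst hgt hκt (hct : c < t)
    rw [sign_eq_neg_one_iff.2 (sub_neg.2 hct), sign_eq_neg_one_iff, hgt] at hst
    exact neg_of_mul_neg_right hst hκt.le
  obtain ⟨r, hcr, hr⟩ := mem_nhdsGT_iff_exists_Ioo_subset.1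
    (hw.and (nhdsWithin_le_nhds (hv.and hmin)))
  obtain ⟨t, hct, htr⟩ := exists_between (show c < r from hcr)
  have hcont : ContinuousOn v (Icc c t) := by
    intro s hs
    rcases hs.1.eq_or_lt with rfl | hcs
    · exact hv.self_of_nhds.continuousAt.continuousWithinAt
    · exact (hr ⟨hcs, hs.2.trans_lt htr⟩).2.1.continuousAt.continuousWithinAt
  obtain ⟨ξ, hξ, hslope⟩ := exists_hasDerivAt_eq_slope v w hct hcont
    fun s hs => (hr ⟨hs.1, hs.2.trans htr⟩).2.1
  have hξneg : w ξ < 0 := (hr ⟨hξ.1, hξ.2.trans htr⟩).1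
  have hvt : v c ≤ v t := (hr ⟨hct, htr⟩).2.2
  rw [hslope] at hξneg
  exact hξneg.not_ge (div_nonneg (sub_nonneg.2 hvt) (sub_pos.2 hct).le)

theorem IsLocalMax.nonpos_of_hasDerivAt_of_eq_mul (hmax : IsLocalMax v c)
    (hv : ∀ᶠ t in 𝓝 c, HasDerivAt v (w t) t) (hg : HasDerivAt g d c)
    (hgw : ∀ᶠ t in 𝓝 c, g t = κ t * w t) (hκ : ∀ᶠ t in 𝓝 c, 0 < κ t) : d ≤ 0 := by
  have := hmax.neg.nonneg_of_hasDerivAt_of_eq_mul (w := fun t => -w t) (g := fun t => -g t)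
    (hv.mono fun t ht => ht.neg) hg.neg (hgw.mono fun t ht => by rw [ht, mul_neg]) hκ
  linarith

end SecondDerivativeTest

section CriticalPoint

variable {ρ c b'c f'c : ℝ} {b σ f u u' u'' : ℝ → ℝ}

theorem hasDerivAt_ode_residual (hb : HasDerivAt b b'c c) (hf : HasDerivAt f f'c c)
    (hu : HasDerivAt u (u' c) c) (hu' : HasDerivAt u' 0 c) :
    HasDerivAt (fun t => ρ * u t - b t * u' t - f t) ((ρ - b'c) * u' c - f'c) c :=
  (((hu.const_mul ρ).sub (hb.mul hu')).sub hf).congr_deriv (by ring)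

theorem IsLocalMin.le_mul_of_ode (hmin : IsLocalMin u' c) (hb : HasDerivAt b b'c c)
    (hf : HasDerivAt f f'c c) (hu : HasDerivAt u (u' c) c)
    (hu' : ∀ᶠ t in 𝓝 c, HasDerivAt u' (u'' t) t) (hσ : ∀ᶠ t in 𝓝 c, σ t ≠ 0)
    (hode : ∀ᶠ t in 𝓝 c, ρ * u t = b t * u' t + 1 / 2 * σ t ^ 2 * u'' t + f t) :
    f'c ≤ (ρ - b'c) * u' c := by
  have hcrit := hmin.hasDerivAt_eq_zero hu'.self_of_nhds
  have := hmin.nonneg_of_hasDerivAt_of_eq_mul (κ := fun t => 1 / 2 * σ t ^ 2) hu'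
    (hasDerivAt_ode_residual (ρ := ρ) hb hf hu (hcrit ▸ hu'.self_of_nhds))
    (hode.mono fun t ht => by linarith) (hσ.mono fun t ht => by positivity)
  linarith

theorem IsLocalMax.mul_le_of_ode (hmax : IsLocalMax u' c) (hb : HasDerivAt b b'c c)
    (hf : HasDerivAt f f'c c) (hu : HasDerivAt u (u' c) c)
    (hu' : ∀ᶠ t in 𝓝 c, HasDerivAt u' (u'' t) t) (hσ : ∀ᶠ t in 𝓝 c, σ t ≠ 0)
    (hode : ∀ᶠ t in 𝓝 c, ρ * u t = b t * u' t + 1 / 2 * σ t ^ 2 * u'' t + f t) :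
    (ρ - b'c) * u' c ≤ f'c := by
  have hcrit := hmax.hasDerivAt_eq_zero hu'.self_of_nhds
  have := hmax.nonpos_of_hasDerivAt_of_eq_mul (κ := fun t => 1 / 2 * σ t ^ 2) hu'
    (hasDerivAt_ode_residual (ρ := ρ) hb hf hu (hcrit ▸ hu'.self_of_nhds))
    (hode.mono fun t ht => by linarith) (hσ.mono fun t ht => by positivity)
  linarith

end CriticalPoint

section Quasiconcavity

variable {a ρ c : ℝ} {b b' σ f f' u u' u'' : ℝ → ℝ}

theorem pos_of_isLocalMin_of_ode (ha : 0 ≤ a) (hb : ∀ x > (0:ℝ), HasDerivAt b (b' x) x)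
    (hσpos : ∀ x > (0:ℝ), 0 < σ x) (hf : ∀ x > (0:ℝ), HasDerivAt f (f' x) x)
    (hf'pos : ∀ x > (0:ℝ), 0 < f' x) (hρb : ∀ x > (0:ℝ), b' x < ρ)
    (hu : ∀ x ∈ Ioi a, HasDerivAt u (u' x) x) (hu' : ∀ x ∈ Ioi a, HasDerivAt u' (u'' x) x)
    (hode : ∀ x ∈ Ioi a, ρ * u x = b x * u' x + (1 / 2) * (σ x) ^ 2 * u'' x + f x)
    (hc : a < c) (hmin : IsLocalMin u' c) : 0 < u' c := by
  have hc0 : 0 < c := ha.trans_lt hc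
  have hnear : ∀ᶠ t in 𝓝 c, a < t := Ioi_mem_nhds hc
  have key := hmin.le_mul_of_ode (hb c hc0) (hf c hc0) (hu c hc) (hnear.mono hu')
    (hnear.mono fun t ht => (hσpos t (ha.trans_lt ht)).ne') (hnear.mono hode)
  exact pos_of_mul_pos_right ((hf'pos c hc0).trans_le key) (sub_pos.2 (hρb c hc0)).le

theorem lt_of_isLocalMin_of_isLocalMax_of_ode {c₁ : ℝ} (ha : 0 ≤ a)
    (hb : ∀ x > (0:ℝ), HasDerivAt b (b' x) x) (hbconc : ConcaveOn ℝ (Ioi (0:ℝ)) b)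
    (hσpos : ∀ x > (0:ℝ), 0 < σ x) (hf : ∀ x > (0:ℝ), HasDerivAt f (f' x) x)
    (hf'anti : StrictAntiOn f' (Ioi (0:ℝ))) (hρb : ∀ x > (0:ℝ), b' x < ρ)
    (hu : ∀ x ∈ Ioi a, HasDerivAt u (u' x) x) (hu' : ∀ x ∈ Ioi a, HasDerivAt u' (u'' x) x)
    (hode : ∀ x ∈ Ioi a, ρ * u x = b x * u' x + (1 / 2) * (σ x) ^ 2 * u'' x + f x)
    (hc : a < c) (hcc₁ : c < c₁) (hmin : IsLocalMin u' c) (hmax : IsLocalMax u' c₁)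
    (hpos : 0 < u' c) : u' c₁ < u' c := by
  have hc0 : 0 < c := ha.trans_lt hc
  have hc₁0 : 0 < c₁ := hc0.trans hcc₁
  have hnear : ∀ᶠ t in 𝓝 c, a < t := Ioi_mem_nhds hc
  have hnear₁ : ∀ᶠ t in 𝓝 c₁, a < t := Ioi_mem_nhds (hc.trans hcc₁)
  have hσ : ∀ t ∈ Ioi a, σ t ≠ 0 := fun t ht => (hσpos t (ha.trans_lt ht)).ne'
  have hatmin := hmin.le_mul_of_ode (hb c hc0) (hf c hc0) (hu c hc) (hnear.mono hu')
    (hnear.mono hσ) (hnear.mono hode)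
  have hatmax := hmax.mul_le_of_ode (hb c₁ hc₁0) (hf c₁ hc₁0) (hu c₁ (hc.trans hcc₁))
    (hnear₁.mono hu') (hnear₁.mono hσ) (hnear₁.mono hode)
  have hf'lt : f' c₁ < f' c := hf'anti hc0 hc₁0 hcc₁
  have hb'le : b' c₁ ≤ b' c := by
    have := hbconc.antitoneOn_deriv (fun x hx => (hb x hx).differentiableAt) hc0 hc₁0 hcc₁.le
    rwa [(hb c hc0).deriv, (hb c₁ hc₁0).deriv] at this
  have hchain : (ρ - b' c₁) * u' c₁ < (ρ - b' c₁) * u' c := calc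
    (ρ - b' c₁) * u' c₁ ≤ f' c₁ := hatmax
    _ < f' c := hf'lt
    _ ≤ (ρ - b' c) * u' c := hatmin
    _ ≤ (ρ - b' c₁) * u' c := mul_le_mul_of_nonneg_right (by linarith) hpos.le
  exact lt_of_mul_lt_mul_left hchain (sub_pos.2 (hρb c₁ hc₁0)).le

end Quasiconcavity

theorem stmt_13_general (a ρ c₀ : ℝ) (ha : 0 ≤ a)
    (b b' σ f f' : ℝ → ℝ)
    (hb : ∀ x > (0:ℝ), HasDerivAt b (b' x) x)
    (hbconc : ConcaveOn ℝ (Set.Ioi (0:ℝ)) b)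
    (hσpos : ∀ x > (0:ℝ), 0 < σ x)
    (hf : ∀ x > (0:ℝ), HasDerivAt f (f' x) x)
    (hf'pos : ∀ x > (0:ℝ), 0 < f' x)
    (hf'anti : StrictAntiOn f' (Set.Ioi (0:ℝ)))
    (hρb : ∀ x > (0:ℝ), b' x < ρ)
    (u u' u'' : ℝ → ℝ)
    (hu : ∀ x ∈ Set.Ioi a, HasDerivAt u (u' x) x)
    (hu' : ∀ x ∈ Set.Ioi a, HasDerivAt u' (u'' x) x)
    (hode : ∀ x ∈ Set.Ioi a,
      ρ * u x = b x * u' x + (1 / 2) * (σ x) ^ 2 * u'' x + f x)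
    (hliminf : ∀ ε > (0:ℝ), ∀ xbar : ℝ, ∃ x ≥ xbar, x ∈ Set.Ioi a ∧ u' x ≤ ε) :
    (∀ x ∈ Set.Ioi a, ∀ y ∈ Set.Ioi a, ∀ z, x < z → z < y →
        min (u' x) (u' y) < u' z) ∧
    (∀ x ∈ Set.Ioi a, ∀ y ∈ Set.Ioi a, ∀ z ∈ Set.Ioi a,
        x < y → y < z → u' x = c₀ → u' y = c₀ → u' z = c₀ → False) ∧
    (∀ s ∈ Set.Ioi a, ∀ S ∈ Set.Ioi a, s < S → u' s = c₀ → u' S = c₀ →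
        ∀ z ∈ Set.Ioo s S, c₀ < u' z) := by
  have hcont : ∀ p ∈ Ioi a, ∀ q, ContinuousOn u' (Icc p q) := fun p hp q t ht =>
    (hu' t (hp.trans_le ht.1)).continuousAt.continuousWithinAt
  have quasi : ∀ x ∈ Ioi a, ∀ y ∈ Ioi a, ∀ z, x < z → z < y →
      min (u' x) (u' y) < u' z := by
    intro x hx y hy z hxz hzy
    by_contra! hz
    obtain ⟨c, hc, hcmin⟩ := exists_mem_Ioo_isMinOn_Icc (hcont x hx y) ⟨hxz, hzy⟩
      (hz.trans (min_le_left _ _)) (hz.trans (min_le_right _ _))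
    have hca : a < c := hx.trans hc.1
    have hlocmin := hcmin.isLocalMin (Icc_mem_nhds hc.1 hc.2)
    have hpos := pos_of_isLocalMin_of_ode ha hb hσpos hf hf'pos hρb hu hu' hode hca hlocmin
    have hcy : u' c ≤ u' y := isMinOn_iff.1 hcmin y ⟨(hc.1.trans hc.2).le, le_rfl⟩
    obtain ⟨x', hyx', -, hx'⟩ := hliminf (u' c / 2) (half_pos hpos) y
    have hyx'' : y < x' := hyx'.lt_of_ne (by rintro rfl; linarith)
    obtain ⟨c₁, hc₁, hc₁max⟩ := exists_mem_Ioo_isMaxOn_Icc (hcont c hca x') ⟨hc.2, hyx''⟩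
      hcy (by linarith)
    have hlt := lt_of_isLocalMin_of_isLocalMax_of_ode ha hb hbconc hσpos hf hf'anti hρb hu hu'
      hode hca hc₁.1 hlocmin (hc₁max.isLocalMax (Icc_mem_nhds hc₁.1 hc₁.2)) hpos
    have hyc₁ : u' y ≤ u' c₁ := isMaxOn_iff.1 hc₁max y ⟨hc.2.le, hyx'⟩
    linarith
  refine ⟨quasi, fun x hx y hy z hz hxy hyz hx₀ hy₀ hz₀ => ?_,
    fun s hs S hS _ hs₀ hS₀ z hz => ?_⟩
  · simpa [hx₀, hy₀, hz₀] using quasi x hx z hz y hxy hyz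
  · simpa [hs₀, hS₀] using quasi s hs S hS z hz.1 hz.2

theorem stmt_13 (a ρ c₀ : ℝ) (ha : 0 ≤ a) (hρ : 0 < ρ) (hc₀ : 0 < c₀)
    (b b' σ f f' : ℝ → ℝ)
    (hb : ∀ x > (0:ℝ), HasDerivAt b (b' x) x)
    (hbconc : ConcaveOn ℝ (Set.Ioi (0:ℝ)) b)
    (hσpos : ∀ x > (0:ℝ), 0 < σ x)
    (hf : ∀ x > (0:ℝ), HasDerivAt f (f' x) x)
    (hf'pos : ∀ x > (0:ℝ), 0 < f' x)
    (hf'anti : StrictAntiOn f' (Set.Ioi (0:ℝ)))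
    (hρb : ∀ x > (0:ℝ), b' x < ρ)
    (u u' u'' u''' : ℝ → ℝ)
    (hu : ∀ x ∈ Set.Ioi a, HasDerivAt u (u' x) x)
    (hu' : ∀ x ∈ Set.Ioi a, HasDerivAt u' (u'' x) x)
    (hu'' : ∀ x ∈ Set.Ioi a, HasDerivAt u'' (u''' x) x)
    (hode : ∀ x ∈ Set.Ioi a,
      ρ * u x = b x * u' x + (1 / 2) * (σ x) ^ 2 * u'' x + f x)
    (hliminf : ∀ ε > (0:ℝ), ∀ xbar : ℝ, ∃ x ≥ xbar, x ∈ Set.Ioi a ∧ u' x ≤ ε) :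
    (∀ x ∈ Set.Ioi a, ∀ y ∈ Set.Ioi a, ∀ z, x < z → z < y →
        min (u' x) (u' y) < u' z) ∧
    (∀ x ∈ Set.Ioi a, ∀ y ∈ Set.Ioi a, ∀ z ∈ Set.Ioi a,
        x < y → y < z → u' x = c₀ → u' y = c₀ → u' z = c₀ → False) ∧
    (∀ s ∈ Set.Ioi a, ∀ S ∈ Set.Ioi a, s < S → u' s = c₀ → u' S = c₀ →
        ∀ z ∈ Set.Ioo s S, c₀ < u' z) :=
  stmt_13_general a ρ c₀ ha b b' σ f f' hb hbconc hσpos hf hf'pos hf'anti hρb u u' u'' hu hu' hode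
    hliminf
end
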